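/- Let n ≥ 4 and k ≥ 3, and let α be an acyclic k-coloring of C⃗_{2n+1}⟨n⟩ having a color class C_j^α that is not a forbidden triangle. Then there is an acyclic k-coloring β whose j-th color class is C_j^β = {a, a+1, …, a+n−1} for some a ∈ Z_{2n+1}, with d(α,β) ≤ n − |C_j^α| if |C_j^α| ≤ 1, and d(α,β) ≤ n + 2 − |C_j^α| otherwise, where d denotes distance in the k-dicoloring graph of C⃗_{2n+1}⟨n⟩. -/

import Mathlib

/-!
Windows `{a, …, a+n-1}` are acyclic, so a color class `C` inside a window is grown to the whole
window by recoloring its missing vertices one at a time.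

If `C` contains no antipodal pair `{i, i+n}`, all arcs inside `C` have jumps in `[1, n-1]`, so `C`
lies in the window starting at a source of `C`. Otherwise, since `C` is acyclic and a forbidden
triangle is a maximal acyclic set, `C ⊆ {i, i+n} ∪ {i+n+2, …, i+2n-1}`. Grow `C` to
`(W \ {i+2n}) ∪ {i+n}`, where `W = {i+n+2, …, i+2n, i}`, in which `i+n` is a source; then move
`i+n` to a third color avoiding that of `i+n+1`, its only out-neighbour outside `W`, and finally
add `i+2n`: two extra steps.
-/

def AcyclicOn {V : Type*} (A : V → V → Prop) (S : Set V) : Prop :=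
  ∀ v, ¬ Relation.TransGen (fun x y => x ∈ S ∧ y ∈ S ∧ A x y) v v

def IsAcyclicColoring {V : Type*} (A : V → V → Prop) (k : ℕ) (α : V → Fin k) : Prop :=
  ∀ c : Fin k, AcyclicOn A {v | α v = c}

def DicolGraph {V : Type*} (A : V → V → Prop) (k : ℕ) :
    SimpleGraph {α : V → Fin k // IsAcyclicColoring A k α} where
  Adj α β := ∃! v, α.1 v ≠ β.1 v
  symm := by
    constructor
    rintro α β ⟨v, hv, hu⟩
    exact ⟨v, Ne.symm hv, fun w hw => hu w (Ne.symm hw)⟩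
  loopless := by
    constructor
    rintro α ⟨v, hv, -⟩
    exact hv rfl

def CycArc (n : ℕ) (a b : ZMod (2*n+1)) : Prop := (b - a).val ∈ Finset.Icc 1 n

def RevArc (n : ℕ) (a b : ZMod (2*n+1)) : Prop :=
  (b - a).val ∈ Finset.Icc 1 (n-1) ∨ (b - a).val = n + 1

def ForbiddenTriangle (n : ℕ) (S : Set (ZMod (2*n+1))) : Prop :=
  ∃ i : ZMod (2*n+1), S = {i, i + n, i + n + 1}

section Digraph

variable {V : Type*} {A : V → V → Prop} {S T : Set V}

theorem AcyclicOn.mono (hT : AcyclicOn A T) (hST : S ⊆ T) : AcyclicOn A S := fun v hv =>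
  hT v (Relation.TransGen.mono (fun _ _ h => ⟨hST h.1, hST h.2.1, h.2.2⟩) v v hv)

theorem AcyclicOn.not_triangle (hS : AcyclicOn A S) {a b c : V} (ha : a ∈ S) (hb : b ∈ S)
    (hc : c ∈ S) : ¬ (A a b ∧ A b c ∧ A c a) := fun ⟨hab, hbc, hca⟩ =>
  hS a (.head ⟨ha, hb, hab⟩ (.head ⟨hb, hc, hbc⟩ (.single ⟨hc, ha, hca⟩)))

theorem acyclicOn_of_rank {β : Type*} [Preorder β] (f : V → β)
    (hf : ∀ x ∈ S, ∀ y ∈ S, A x y → f x < f y) : AcyclicOn A S := fun v hv => by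
  have h := Relation.TransGen.lift f (p := (· < ·)) (fun x y h => hf x h.1 y h.2.1 h.2.2) v v hv
  rw [Relation.transGen_eq_self] at h
  exact lt_irrefl _ h

theorem AcyclicOn.insert_of_sink {x : V} (hS : AcyclicOn A S)
    (hx : ∀ y ∈ insert x S, ¬ A x y) : AcyclicOn A (insert x S) := by
  have avoid : ∀ {p q},
      Relation.TransGen (fun u v => u ∈ insert x S ∧ v ∈ insert x S ∧ A u v) p q → q ≠ x →
        Relation.TransGen (fun u v => u ∈ S ∧ v ∈ S ∧ A u v) p q := by
    intro p q h
    induction h with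
    | single h =>
      intro hq
      have hp : p ≠ x := by rintro rfl; exact hx _ h.2.1 h.2.2
      exact .single ⟨h.1.resolve_left hp, h.2.1.resolve_left hq, h.2.2⟩
    | @tail b _ _ h ih =>
      intro hq
      have hb : b ≠ x := by rintro rfl; exact hx _ h.2.1 h.2.2
      exact (ih hb).tail ⟨h.1.resolve_left hb, h.2.1.resolve_left hq, h.2.2⟩
  intro v hv
  obtain ⟨c, hvc, -⟩ := Relation.TransGen.head'_iff.1 hv
  exact hS v (avoid hv (by rintro rfl; exact hx _ hvc.2.1 hvc.2.2))

theorem AcyclicOn.exists_source [Finite V] (hS : AcyclicOn A S) (hne : S.Nonempty) :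
    ∃ p ∈ S, ∀ v ∈ S, ¬ A v p := by
  let R := Relation.TransGen (fun x y => x ∈ S ∧ y ∈ S ∧ A x y)
  have : IsTrans V R := ⟨fun _ _ _ => Relation.TransGen.trans⟩
  have : Std.Irrefl R := ⟨hS⟩
  obtain ⟨p, hp, hmin⟩ := (Finite.wellFounded_of_trans_of_irrefl R).has_min S hne
  exact ⟨p, hp, fun v hv h => hmin v hv (.single ⟨hv, hp, h⟩)⟩

end Digraph

section Recoloring

variable {V : Type*} [DecidableEq V] {A : V → V → Prop} {k : ℕ}

theorem setOf_update_eq_insert (γ : V → Fin k) (x : V) (j : Fin k) :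
    {v | Function.update γ x j v = j} = insert x {v | γ v = j} := by
  ext v
  by_cases hv : v = x <;> simp [Function.update_apply, hv]

theorem setOf_update_eq_diff (γ : V → Fin k) (x : V) {c j : Fin k} (hcj : c ≠ j) :
    {v | Function.update γ x c v = j} = {v | γ v = j} \ {x} := by
  ext v
  by_cases hv : v = x <;> simp [Function.update_apply, hv, hcj]

theorem IsAcyclicColoring.update {γ : V → Fin k} (hγ : IsAcyclicColoring A k γ) {x : V}
    {c : Fin k} (hc : AcyclicOn A (insert x {v | γ v = c})) :
    IsAcyclicColoring A k (Function.update γ x c) := by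
  intro c'
  by_cases h : c' = c
  · subst h
    rw [setOf_update_eq_insert]
    exact hc
  · refine (hγ c').mono fun v hv => ?_
    by_cases hvx : v = x
    · subst hvx
      exact absurd (by simpa using hv) (Ne.symm h)
    · simpa [Function.update_of_ne hvx] using hv

theorem IsAcyclicColoring.update_of_sink {γ : V → Fin k} (hγ : IsAcyclicColoring A k γ)
    {x : V} {c : Fin k} (hxx : ¬ A x x) (hx : ∀ y, A x y → γ y ≠ c) :
    IsAcyclicColoring A k (Function.update γ x c) :=
  hγ.update <| (hγ c).insert_of_sink fun y hy hxy => by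
    rcases hy with rfl | hy
    · exact hxx hxy
    · exact hx y hxy hy

theorem dicolGraph_adj_update {γ : V → Fin k} (hγ : IsAcyclicColoring A k γ) {x : V}
    {c : Fin k} (hne : γ x ≠ c) (hγ' : IsAcyclicColoring A k (Function.update γ x c)) :
    (DicolGraph A k).Adj ⟨γ, hγ⟩ ⟨Function.update γ x c, hγ'⟩ :=
  ⟨x, by simpa using hne,
    fun y hy => by_contra fun hyx => hy (Function.update_of_ne hyx c γ).symm⟩

theorem exists_walk_fill (j : Fin k) {Q : Set V} (hQfin : Q.Finite) (hQ : AcyclicOn A Q)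
    (γ : V → Fin k) (hγ : IsAcyclicColoring A k γ) (hsub : {v | γ v = j} ⊆ Q) :
    ∃ (δ : V → Fin k) (hδ : IsAcyclicColoring A k δ), {v | δ v = j} = Q ∧
      ∃ p : (DicolGraph A k).Walk ⟨γ, hγ⟩ ⟨δ, hδ⟩,
        p.length = Q.ncard - {v | γ v = j}.ncard := by
  induction hm : Q.ncard - {v | γ v = j}.ncard generalizing γ with
  | zero =>
    exact ⟨γ, hγ, Set.eq_of_subset_of_ncard_le hsub (by omega) hQfin, .nil, rfl⟩
  | succ m ih =>
    obtain ⟨q, hqQ, hq⟩ : ∃ q ∈ Q, γ q ≠ j := by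
      by_contra! h
      have := Set.ncard_le_ncard (show Q ⊆ {v | γ v = j} from h) (hQfin.subset hsub)
      omega
    have hcls := setOf_update_eq_insert γ q j
    have hsub' : {v | Function.update γ q j v = j} ⊆ Q := hcls ▸ Set.insert_subset hqQ hsub
    have hγ' := hγ.update (hQ.mono (hcls ▸ hsub'))
    obtain ⟨δ, hδ, hδQ, p, hp⟩ := ih _ hγ' hsub' (by
      rw [hcls, Set.ncard_insert_of_notMem (show q ∉ {v | γ v = j} from hq) (hQfin.subset hsub)]
      omega)
    exact ⟨δ, hδ, hδQ, .cons (dicolGraph_adj_update hγ hq hγ') p, by simp [hp]⟩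

end Recoloring

section Circulant

variable {n : ℕ}

theorem revArc_iff {u v : ZMod (2*n+1)} :
    RevArc n u v ↔ (1 ≤ (v - u).val ∧ (v - u).val ≤ n - 1) ∨ (v - u).val = n + 1 := by
  simp [RevArc, Finset.mem_Icc]

/-- Together with `ZMod.val_lt` and `revArc_iff`, this turns every question about arcs between
points given by their offsets from `i` into linear arithmetic. -/
theorem val_sub_add_val_sub (i u v : ZMod (2*n+1)) :
    (u - i).val + (v - u).val = (v - i).val ∨
      (u - i).val + (v - u).val = (v - i).val + (2*n+1) := by
  have h := ZMod.val_add (u - i) (v - u)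
  rw [sub_add_sub_cancel'] at h
  have := ZMod.val_lt (u - i)
  have := ZMod.val_lt (v - u)
  rcases lt_or_ge ((u - i).val + (v - u).val) (2*n+1) with hlt | hge
  · left
    rw [h, Nat.mod_eq_of_lt hlt]
  · right
    rw [h, Nat.mod_eq_sub_mod hge, Nat.mod_eq_of_lt (by omega)]
    omega

theorem val_add_natCast_sub_self (i : ZMod (2*n+1)) {m : ℕ} (hm : m < 2*n+1) :
    (i + m - i).val = m := by
  rw [add_sub_cancel_left, ZMod.val_cast_of_lt hm]

theorem eq_add_of_val_sub_eq {i v : ZMod (2*n+1)} {m : ℕ} (h : (v - i).val = m) : v = i + m := by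
  rw [← h]
  simp

theorem not_revArc_self (u : ZMod (2*n+1)) : ¬ RevArc n u u := by
  simp [revArc_iff]

def window (n : ℕ) (a : ZMod (2*n+1)) : Set (ZMod (2*n+1)) := {v | (v - a).val < n}

theorem ncard_window (a : ZMod (2*n+1)) : (window n a).ncard = n := by
  have himage : window n a = (fun t : ℕ => a + t) '' Set.Iio n := by
    ext v
    constructor
    · intro hv
      exact ⟨(v - a).val, hv, by simp⟩
    · rintro ⟨t, ht, rfl⟩
      have ht : t < n := ht
      simp only [window, Set.mem_ofPred_eq, val_add_natCast_sub_self a (by omega : t < 2*n+1)]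
      exact ht
  rw [himage, Set.InjOn.ncard_image, Set.ncard_Iio_nat]
  intro s hs t ht hst
  have h := congrArg ZMod.val (add_left_cancel hst)
  rwa [ZMod.val_cast_of_lt (lt_of_lt_of_le hs (by omega)),
    ZMod.val_cast_of_lt (lt_of_lt_of_le ht (by omega))] at h

theorem acyclicOn_window (a : ZMod (2*n+1)) : AcyclicOn (RevArc n) (window n a) :=
  acyclicOn_of_rank (fun v => (v - a).val) fun u hu v hv huv => by
    have := val_sub_add_val_sub a u v
    rw [revArc_iff] at huv
    simp only [window, Set.mem_ofPred_eq] at hu hv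
    omega

theorem exists_subset_window {S : Set (ZMod (2*n+1))} (hS : AcyclicOn (RevArc n) S)
    (hpair : ∀ i ∈ S, i + n ∉ S) : ∃ a, S ⊆ window n a := by
  rcases S.eq_empty_or_nonempty with rfl | hne
  · exact ⟨0, Set.empty_subset _⟩
  obtain ⟨p, hp, hsrc⟩ := hS.exists_source hne
  refine ⟨p, fun v hv => ?_⟩
  have hvp : (v - p).val ≠ n := fun h => hpair p hp (eq_add_of_val_sub_eq h ▸ hv)
  have hpv : (p - v).val ≠ n := fun h => hpair v hv (eq_add_of_val_sub_eq h ▸ hp)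
  have hsum := val_sub_add_val_sub p v p
  have := ZMod.val_lt (v - p)
  have hrev := hsrc v hv
  simp only [sub_self, ZMod.val_zero, revArc_iff] at hsum hrev
  simp only [window, Set.mem_ofPred_eq]
  omega

variable {S : Set (ZMod (2*n+1))}

theorem val_sub_eq_zero_or_le_of_antipodal (hS : AcyclicOn (RevArc n) S) {i v : ZMod (2*n+1)}
    (hi : i ∈ S) (hin : i + n ∈ S) (hv : v ∈ S) : (v - i).val = 0 ∨ n ≤ (v - i).val := by
  by_contra! h
  have h1 := val_sub_add_val_sub i v (i + n)
  have h2 := val_sub_add_val_sub i (i + n) i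
  have := ZMod.val_lt (i + (n : ZMod (2*n+1)) - v)
  rw [val_add_natCast_sub_self i (by omega : n < 2*n+1)] at h1 h2
  simp only [sub_self, ZMod.val_zero] at h2
  refine hS.not_triangle hi hv hin ⟨?_, ?_, ?_⟩ <;> rw [revArc_iff] <;> omega

theorem eq_of_forbiddenTriangle_subset (hn : 1 ≤ n) (hS : AcyclicOn (RevArc n) S)
    {i : ZMod (2*n+1)} (hT : {i, i + n, i + n + 1} ⊆ S) : S = {i, i + n, i + n + 1} := by
  refine subset_antisymm (fun v hv => ?_) hT
  have hi : i ∈ S := hT (by simp)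
  have hin : i + n ∈ S := hT (by simp)
  have hu : i + n + 1 = i + ((n + 1 : ℕ) : ZMod (2*n+1)) := by push_cast; ring
  have hin1 : i + ((n + 1 : ℕ) : ZMod (2*n+1)) ∈ S := hu ▸ hT (by simp)
  have hu_val := val_add_natCast_sub_self i (by omega : n + 1 < 2*n+1)
  have := ZMod.val_lt (v - i)
  have hA := val_sub_eq_zero_or_le_of_antipodal hS hi hin hv
  simp only [Set.mem_insert_iff, Set.mem_singleton_iff, hu]
  by_cases h0 : (v - i).val = 0
  · exact .inl (by simpa using eq_add_of_val_sub_eq h0)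
  by_cases hn' : (v - i).val = n
  · exact .inr (.inl (eq_add_of_val_sub_eq hn'))
  by_cases hn1 : (v - i).val = n + 1
  · exact .inr (.inr (eq_add_of_val_sub_eq hn1))
  exfalso
  have h1 := val_sub_add_val_sub i (i + ((n + 1 : ℕ) : ZMod (2*n+1))) v
  have h2 := val_sub_add_val_sub i v i
  have := ZMod.val_lt (v - (i + ((n + 1 : ℕ) : ZMod (2*n+1))))
  rw [hu_val] at h1
  simp only [sub_self, ZMod.val_zero] at h2
  refine hS.not_triangle hi hin1 hv ⟨?_, ?_, ?_⟩ <;> rw [revArc_iff] <;> omega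

end Circulant

section Antipodal

variable {n : ℕ}

theorem val_sub_mem_of_antipodal (hn : 1 ≤ n) {S : Set (ZMod (2*n+1))}
    (hS : AcyclicOn (RevArc n) S) (hnf : ¬ ForbiddenTriangle n S) {i v : ZMod (2*n+1)}
    (hi : i ∈ S) (hin : i + n ∈ S) (hv : v ∈ S) :
    (v - i).val = 0 ∨ (v - i).val = n ∨ (n + 2 ≤ (v - i).val ∧ (v - i).val < 2 * n) := by
  have hA := val_sub_eq_zero_or_le_of_antipodal hS hi hin hv
  have := ZMod.val_lt (v - i)
  have hn1 : (v - i).val ≠ n + 1 := fun h => by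
    refine hnf ⟨i, eq_of_forbiddenTriangle_subset hn hS ?_⟩
    have hv_eq : v = i + n + 1 := by rw [eq_add_of_val_sub_eq h]; push_cast; ring
    simp only [Set.insert_subset_iff, Set.singleton_subset_iff, ← hv_eq]
    exact ⟨hi, hin, hv⟩
  have h2n : (v - i).val ≠ 2 * n := fun h => by
    refine hnf ⟨i + n, eq_of_forbiddenTriangle_subset hn hS ?_⟩
    have hv_eq : v = i + n + n := by rw [eq_add_of_val_sub_eq h]; push_cast; ring
    have hi_eq : i + n + n + 1 = i := by
      have h0 : ((2*n+1 : ℕ) : ZMod (2*n+1)) = 0 := ZMod.natCast_self _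
      push_cast at h0
      linear_combination h0
    rw [hi_eq, ← hv_eq]
    simp only [Set.insert_subset_iff, Set.singleton_subset_iff]
    exact ⟨hin, hv, hi⟩
  omega

theorem mem_window_add_iff (hn : 2 ≤ n) (i v : ZMod (2*n+1)) :
    v ∈ window n (i + (n + 2 : ℕ)) ↔ (v - i).val = 0 ∨ n + 2 ≤ (v - i).val := by
  have h := val_sub_add_val_sub i (i + ((n + 2 : ℕ) : ZMod (2*n+1))) v
  rw [val_add_natCast_sub_self i (by omega)] at h
  have := ZMod.val_lt (v - i)
  have := ZMod.val_lt (v - (i + ((n + 2 : ℕ) : ZMod (2*n+1))))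
  simp only [window, Set.mem_ofPred_eq]
  omega

theorem mem_insert_window_diff_iff (hn : 2 ≤ n) (i v : ZMod (2*n+1)) :
    v ∈ insert (i + n) (window n (i + (n + 2 : ℕ)) \ {i + (2 * n : ℕ)}) ↔
      (v - i).val = 0 ∨ (v - i).val = n ∨ (n + 2 ≤ (v - i).val ∧ (v - i).val < 2 * n) := by
  have hx := val_add_natCast_sub_self i (by omega : n < 2*n+1)
  have hw := val_add_natCast_sub_self i (by omega : 2 * n < 2*n+1)
  have := ZMod.val_lt (v - i)
  simp only [Set.mem_insert_iff, Set.mem_sdiff, Set.mem_singleton_iff, mem_window_add_iff hn]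
  constructor
  · rintro (rfl | ⟨h, hne⟩)
    · omega
    · have : (v - i).val ≠ 2 * n := fun h' => hne (eq_add_of_val_sub_eq h')
      omega
  · intro h
    by_cases hvn : (v - i).val = n
    · exact .inl (eq_add_of_val_sub_eq hvn)
    · refine .inr ⟨by omega, ?_⟩
      rintro rfl
      omega

/-- `i + n` is a source of this set: its only in-neighbour in the window is `i + 2n`. -/
theorem acyclicOn_insert_window_diff (hn : 2 ≤ n) (i : ZMod (2*n+1)) :
    AcyclicOn (RevArc n) (insert (i + n) (window n (i + (n + 2 : ℕ)) \ {i + (2 * n : ℕ)})) :=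
  acyclicOn_of_rank (fun v => (v - (i + n)).val) fun u hu v hv huv => by
    rw [mem_insert_window_diff_iff hn] at hu hv
    rw [revArc_iff] at huv
    have hx := val_add_natCast_sub_self i (by omega : n < 2*n+1)
    have := val_sub_add_val_sub i u v
    have hu' := val_sub_add_val_sub i (i + n) u
    have hv' := val_sub_add_val_sub i (i + n) v
    rw [hx] at hu' hv'
    have := ZMod.val_lt (u - i)
    have := ZMod.val_lt (v - i)
    have := ZMod.val_lt (v - u)
    have := ZMod.val_lt (u - (i + n) : ZMod (2*n+1))
    have := ZMod.val_lt (v - (i + n) : ZMod (2*n+1))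
    omega

theorem eq_or_mem_of_revArc_antipode (hn : 2 ≤ n) {i y : ZMod (2*n+1)}
    (h : RevArc n (i + n) y) :
    y = i + (n + 1 : ℕ) ∨
      y ∈ insert (i + n) (window n (i + (n + 2 : ℕ)) \ {i + (2 * n : ℕ)}) := by
  rw [mem_insert_window_diff_iff hn]
  rw [revArc_iff] at h
  have hsum := val_sub_add_val_sub i (i + n) y
  rw [val_add_natCast_sub_self i (by omega : n < 2*n+1)] at hsum
  have := ZMod.val_lt (y - i)
  have := ZMod.val_lt (y - (i + n) : ZMod (2*n+1))
  by_cases hy : (y - i).val = n + 1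
  · exact .inl (eq_add_of_val_sub_eq hy)
  · omega

variable {k : ℕ}

/-- Recoloring `i + n` with a color other than `j` and that of `i + n + 1` keeps the coloring
acyclic, since every other out-neighbour of `i + n` has color `j`. -/
theorem exists_adj_setOf_eq_window_diff (hn : 2 ≤ n) (hk : 3 ≤ k) (j : Fin k)
    (i : ZMod (2*n+1)) {γ : ZMod (2*n+1) → Fin k} (hγ : IsAcyclicColoring (RevArc n) k γ)
    (hγj : {v | γ v = j} = insert (i + n) (window n (i + (n + 2 : ℕ)) \ {i + (2 * n : ℕ)})) :
    ∃ (γ' : ZMod (2*n+1) → Fin k) (hγ' : IsAcyclicColoring (RevArc n) k γ'),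
      {v | γ' v = j} = window n (i + (n + 2 : ℕ)) \ {i + (2 * n : ℕ)} ∧
      (DicolGraph (RevArc n) k).Adj ⟨γ, hγ⟩ ⟨γ', hγ'⟩ := by
  obtain ⟨c, hcj, hcu⟩ := Fin.exists_ne_and_ne_of_two_lt j (γ (i + (n + 1 : ℕ))) (by omega)
  have hx : γ (i + n) = j := (Set.ext_iff.1 hγj (i + n)).2 (Set.mem_insert _ _)
  have hγ' := hγ.update_of_sink (not_revArc_self _) fun y hy => by
    rcases eq_or_mem_of_revArc_antipode hn hy with rfl | hyQ
    · exact hcu.symm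
    · rw [← hγj] at hyQ
      rw [hyQ]
      exact hcj.symm
  refine ⟨_, hγ', ?_, dicolGraph_adj_update hγ (hx ▸ hcj.symm) hγ'⟩
  rw [setOf_update_eq_diff γ _ hcj, hγj, Set.insert_sdiff_self_of_notMem]
  intro h
  have := (mem_window_add_iff hn i (i + n)).1 h.1
  rw [val_add_natCast_sub_self i (by omega : n < 2*n+1)] at this
  omega

theorem exists_walk_to_window_of_subset (hn : 2 ≤ n) (hk : 3 ≤ k) (j : Fin k)
    (i : ZMod (2*n+1)) {γ : ZMod (2*n+1) → Fin k} (hγ : IsAcyclicColoring (RevArc n) k γ)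
    (hsub : {v | γ v = j} ⊆
      insert (i + n) (window n (i + (n + 2 : ℕ)) \ {i + (2 * n : ℕ)})) :
    ∃ (β : ZMod (2*n+1) → Fin k) (hβ : IsAcyclicColoring (RevArc n) k β),
      {v | β v = j} = window n (i + (n + 2 : ℕ)) ∧
      ∃ p : (DicolGraph (RevArc n) k).Walk ⟨γ, hγ⟩ ⟨β, hβ⟩,
        p.length = n + 2 - {v | γ v = j}.ncard := by
  set W := window n (i + (n + 2 : ℕ))
  set Q := insert (i + n) (W \ {i + (2 * n : ℕ)})
  have hw : i + (2 * n : ℕ) ∈ W := (mem_window_add_iff hn i _).2 <| .inr <| by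
    rw [val_add_natCast_sub_self i (by omega)]
    omega
  have hQ : Q.ncard = n := by
    have hx : i + n ∉ W \ {i + (2 * n : ℕ)} := fun h => by
      have := (mem_window_add_iff hn i _).1 h.1
      rw [val_add_natCast_sub_self i (by omega : n < 2*n+1)] at this
      omega
    rw [Set.ncard_insert_of_notMem hx, Set.ncard_sdiff_singleton_of_mem hw, ncard_window]
    omega
  obtain ⟨γ₁, hγ₁, hγ₁j, p₁, hp₁⟩ :=
    exists_walk_fill j Q.toFinite (acyclicOn_insert_window_diff hn i) γ hγ hsub
  obtain ⟨γ₂, hγ₂, hγ₂j, hadj⟩ := exists_adj_setOf_eq_window_diff hn hk j i hγ₁ hγ₁j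
  obtain ⟨β, hβ, hβj, p₂, hp₂⟩ :=
    exists_walk_fill j W.toFinite (acyclicOn_window _) γ₂ hγ₂ (hγ₂j ▸ Set.sdiff_subset)
  refine ⟨β, hβ, hβj, p₁.append (.cons hadj p₂), ?_⟩
  have := Set.ncard_le_ncard hsub
  rw [hγ₂j, Set.ncard_sdiff_singleton_of_mem hw, ncard_window] at hp₂
  rw [SimpleGraph.Walk.length_append, SimpleGraph.Walk.length_cons, hp₁, hp₂, hQ]
  omega

end Antipodal

theorem stmt11 (n k : ℕ) (hn : 4 ≤ n) (hk : 3 ≤ k)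
    (α : ZMod (2*n+1) → Fin k) (hα : IsAcyclicColoring (RevArc n) k α)
    (j : Fin k) (hnf : ¬ ForbiddenTriangle n {v | α v = j}) :
    ∃ (β : ZMod (2*n+1) → Fin k) (hβ : IsAcyclicColoring (RevArc n) k β)
      (a : ZMod (2*n+1)),
      {v | β v = j} = {v | (v - a).val < n} ∧
      (DicolGraph (RevArc n) k).Reachable ⟨α, hα⟩ ⟨β, hβ⟩ ∧
      (Set.ncard {v | α v = j} ≤ 1 →
        (DicolGraph (RevArc n) k).dist ⟨α, hα⟩ ⟨β, hβ⟩ ≤ n - Set.ncard {v | α v = j}) ∧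
      (2 ≤ Set.ncard {v | α v = j} →
        (DicolGraph (RevArc n) k).dist ⟨α, hα⟩ ⟨β, hβ⟩
          ≤ n + 2 - Set.ncard {v | α v = j}) := by
  by_cases hpair : ∃ i, α i = j ∧ α (i + n) = j
  · obtain ⟨i, hi, hin⟩ := hpair
    have hsub : {v | α v = j} ⊆
        insert (i + n) (window n (i + (n + 2 : ℕ)) \ {i + (2 * n : ℕ)}) :=
      fun v hv => (mem_insert_window_diff_iff (by omega) i v).2
        (val_sub_mem_of_antipodal (by omega) (hα j) hnf hi hin hv)
    obtain ⟨β, hβ, hβj, p, hp⟩ := exists_walk_to_window_of_subset (by omega) hk j i hα hsub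
    have hi_ne : i ≠ i + n := fun h => by
      have := val_add_natCast_sub_self i (by omega : n < 2*n+1)
      rw [← h, sub_self, ZMod.val_zero] at this
      omega
    have hS2 : 1 < {v | α v = j}.ncard :=
      (Set.one_lt_ncard (Set.toFinite _)).2 ⟨i, hi, i + n, hin, hi_ne⟩
    exact ⟨β, hβ, _, hβj, ⟨p⟩, fun h => by omega, fun _ => hp ▸ SimpleGraph.dist_le p⟩
  · push Not at hpair
    obtain ⟨a, ha⟩ := exists_subset_window (hα j) hpair
    obtain ⟨β, hβ, hβj, p, hp⟩ :=
      exists_walk_fill j (window n a).toFinite (acyclicOn_window a) α hα ha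
    rw [ncard_window] at hp
    have hd := hp ▸ SimpleGraph.dist_le p
    exact ⟨β, hβ, a, hβj, ⟨p⟩, fun _ => hd, fun _ => hd.trans (by omega)⟩
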